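/- Let T ⊂ ℝ^n be a nondegenerate simplex with diameter h_T and let p ∈ ℕ. Suppose C_P ≥ 0 satisfies the Poincaré inequality ‖f − (1/|T|)∫_T f dx‖_{L²(T)} ≤ C_P h_T ‖∇f‖_{L²(T;ℝ^n)} for all smooth f : ℝ^n → ℝ, and suppose C₂ ≥ 0 satisfies inf_{v ∈ P_{p+1}(T)} ‖∇(f − v)‖_{L²(T;ℝ^n)} ≤ C₂ ‖∇f − Π_p(∇f)‖_{L²(T;ℝ^n)} for all smooth f. Then for every smooth f there exists a unique g ∈ P_{p+1}(T) with ∫_T (f − g) dx = 0 and ∫_T ∇(f − g)·∇w dx = 0 for all w ∈ P_{p+1}(T) (the Galerkin projection Gf := g), and this g satisfies ‖f − g‖_{L²(T)} ≤ C_P C₂ h_T ‖∇f − Π_p(∇f)‖_{L²(T;ℝ^n)}. (Lemma 2.3, the p-robust stability estimate with σ₂ = C_P C_{st,2}.) -/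

import Mathlib

open MeasureTheory

noncomputable section

abbrev E (n : ℕ) : Type := EuclideanSpace ℝ (Fin n)

/-- `T` is a nondegenerate simplex: the convex hull of `n+1` affinely independent points. -/
def IsSimplex {n : ℕ} (T : Set (E n)) : Prop :=
  ∃ v : Fin (n + 1) → E n, AffineIndependent ℝ v ∧ T = convexHull ℝ (Set.range v)

/-- `g` is (the function of) a real polynomial on `ℝ^n` of total degree at most `m`. -/
def IsPolyDeg {n : ℕ} (m : ℕ) (g : E n → ℝ) : Prop :=
  ∃ P : MvPolynomial (Fin n) ℝ, P.totalDegree ≤ m ∧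
    ∀ x : E n, g x = MvPolynomial.eval (fun i => x i) P

/-- A polynomial vector field of total degree at most `m` (componentwise). -/
def IsPolyVF {n : ℕ} (m : ℕ) (q : E n → E n) : Prop :=
  ∀ j : Fin n, IsPolyDeg m (fun x => q x j)

/-- The `L²(T)` norm of a function. -/
def L2 {n : ℕ} (T : Set (E n)) {α : Type*} [NormedAddCommGroup α] (g : E n → α) : ℝ :=
  Real.sqrt (∫ x in T, ‖g x‖ ^ 2)

/-- `g = Π_m f` is the `L²(T)`-orthogonal projection of `f` onto `P_m(T)`:
`g` is a polynomial of degree at most `m` and `f - g ⊥ P_m(T)` in `L²(T)`. -/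
def IsL2Proj {n : ℕ} (m : ℕ) (T : Set (E n)) (f g : E n → ℝ) : Prop :=
  IsPolyDeg m g ∧ ∀ q : E n → ℝ, IsPolyDeg m q → (∫ x in T, (f x - g x) * q x) = 0

/-- The componentwise `L²(T)`-orthogonal projection of a vector field onto `P_m(T;ℝ^n)`. -/
def IsL2ProjVF {n : ℕ} (m : ℕ) (T : Set (E n)) (f g : E n → E n) : Prop :=
  IsPolyVF m g ∧ ∀ q : E n → E n, IsPolyVF m q →
    (∫ x in T, (inner ℝ (f x - g x) (q x) : ℝ)) = 0

set_option maxHeartbeats 1000000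

variable {n : ℕ}

lemma aeval_eq_eval' (f : Fin n → ℝ) (P : MvPolynomial (Fin n) ℝ) :
    MvPolynomial.aeval f P = MvPolynomial.eval f P := by
  rw [MvPolynomial.aeval_def, MvPolynomial.eval, ← MvPolynomial.coe_eval₂Hom]
  norm_num

lemma analyticOnNhd_eval (P : MvPolynomial (Fin n) ℝ) :
    AnalyticOnNhd ℝ (fun x : E n => MvPolynomial.eval (fun i => x i) P) Set.univ := by
  intro x _
  have h : AnalyticAt ℝ (fun y : E n => MvPolynomial.aeval (fun i => y i) P) x := by
    apply AnalyticAt.aeval_mvPolynomial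
    intro i
    exact (EuclideanSpace.proj i : E n →L[ℝ] ℝ).analyticAt x
  simpa [aeval_eq_eval'] using h

lemma IsPolyDeg.analytic {m : ℕ} {g : E n → ℝ} (h : IsPolyDeg m g) :
    AnalyticOnNhd ℝ g Set.univ := by
  obtain ⟨P, -, hP⟩ := h
  have : g = fun x : E n => MvPolynomial.eval (fun i => x i) P := funext hP
  rw [this]; exact analyticOnNhd_eval P

lemma IsPolyDeg.contDiff {m : ℕ} {g : E n → ℝ} (h : IsPolyDeg m g) :
    ContDiff ℝ (⊤ : ℕ∞) g :=
  h.analytic.contDiff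

lemma IsPolyDeg.add {m : ℕ} {g h : E n → ℝ} (hg : IsPolyDeg m g) (hh : IsPolyDeg m h) :
    IsPolyDeg m (g + h) := by
  obtain ⟨P, hP, hPe⟩ := hg; obtain ⟨Q, hQ, hQe⟩ := hh
  exact ⟨P + Q, le_trans (MvPolynomial.totalDegree_add P Q) (max_le hP hQ),
    fun x => by simp [hPe x, hQe x]⟩

lemma IsPolyDeg.smul {m : ℕ} {g : E n → ℝ} (c : ℝ) (hg : IsPolyDeg m g) :
    IsPolyDeg m (c • g) := by
  obtain ⟨P, hP, hPe⟩ := hg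
  exact ⟨c • P, le_trans (MvPolynomial.totalDegree_smul_le c P) hP,
    fun x => by simp [MvPolynomial.smul_eval, hPe x]⟩

lemma IsPolyDeg.neg {m : ℕ} {g : E n → ℝ} (hg : IsPolyDeg m g) : IsPolyDeg m (-g) := by
  have := hg.smul (-1); simpa using this

lemma isPolyDeg_const {m : ℕ} (c : ℝ) : IsPolyDeg m (fun _ : E n => c) :=
  ⟨MvPolynomial.C c, by simp, fun x => by simp⟩

lemma isPolyDeg_zero {m : ℕ} : IsPolyDeg m (0 : E n → ℝ) := isPolyDeg_const 0

lemma IsPolyDeg.sub {m : ℕ} {g h : E n → ℝ} (hg : IsPolyDeg m g) (hh : IsPolyDeg m h) :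
    IsPolyDeg m (g - h) := by
  have := hg.add hh.neg; simpa [sub_eq_add_neg] using this

lemma gradient_sub' {f g : E n → ℝ} {x : E n} (hf : DifferentiableAt ℝ f x)
    (hg : DifferentiableAt ℝ g x) :
    gradient (f - g) x = gradient f x - gradient g x := by
  unfold gradient
  rw [show (f - g) = (fun y => f y - g y) from rfl, fderiv_fun_sub hf hg, map_sub]

lemma gradient_add' {f g : E n → ℝ} {x : E n} (hf : DifferentiableAt ℝ f x)
    (hg : DifferentiableAt ℝ g x) :
    gradient (f + g) x = gradient f x + gradient g x := by
  unfold gradient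
  rw [show (f + g) = (fun y => f y + g y) from rfl, fderiv_fun_add hf hg, map_add]

lemma gradient_smul' {f : E n → ℝ} {x : E n} (hf : DifferentiableAt ℝ f x) (c : ℝ) :
    gradient (c • f) x = c • gradient f x := by
  unfold gradient
  rw [show (c • f) = (fun y => c • f y) from rfl, fderiv_fun_const_smul hf, _root_.map_smul]

lemma continuous_gradient {f : E n → ℝ} (hf : ContDiff ℝ (⊤ : ℕ∞) f) :
    Continuous (gradient f) := by
  unfold gradient
  exact (InnerProductSpace.toDual ℝ (E n)).symm.continuous.comp
    (hf.continuous_fderiv (by norm_num))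

lemma gradient_eq_zero_iff {f : E n → ℝ} {x : E n} :
    gradient f x = 0 ↔ fderiv ℝ f x = 0 := by
  unfold gradient
  constructor
  · intro h
    have := congrArg (InnerProductSpace.toDual ℝ (E n)) h
    simpa using this
  · intro h; simp [h]

section Simplex
variable {T : Set (E n)} (hT : IsSimplex T)
include hT

lemma IsSimplex.isCompact : IsCompact T := by
  obtain ⟨v, -, rfl⟩ := hT
  exact (Set.finite_range v).isCompact_convexHull ℝ

lemma IsSimplex.convex : Convex ℝ T := by
  obtain ⟨v, -, rfl⟩ := hT; exact convex_convexHull ℝ _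

lemma IsSimplex.measurableSet : MeasurableSet T :=
  hT.isCompact.isClosed.measurableSet

lemma IsSimplex.interior_nonempty : (interior T).Nonempty := by
  obtain ⟨v, hv, rfl⟩ := hT
  rw [(convex_convexHull ℝ _).interior_nonempty_iff_affineSpan_eq_top, affineSpan_convexHull]
  rw [hv.affineSpan_eq_top_iff_card_eq_finrank_add_one]
  simp [finrank_euclideanSpace]

lemma IsSimplex.volume_pos : 0 < volume T :=
  MeasureTheory.Measure.measure_pos_of_nonempty_interior _ hT.interior_nonempty

lemma IsSimplex.volume_ne_top : volume T ≠ ⊤ :=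
  hT.isCompact.measure_ne_top

lemma IsSimplex.volume_toReal_pos : 0 < (volume T).toReal :=
  ENNReal.toReal_pos hT.volume_pos.ne' hT.volume_ne_top

end Simplex

lemma integrableOn_of_continuous {T : Set (E n)} (hTc : IsCompact T) {α : Type*}
    [NormedAddCommGroup α] {h : E n → α} (hh : Continuous h) : IntegrableOn h T volume :=
  hh.continuousOn.integrableOn_compact hTc

lemma poly_eq_const_of_grad_zero {T : Set (E n)} (hT : IsSimplex T) {m : ℕ} {u : E n → ℝ}
    (hu : IsPolyDeg m u) (hgrad : (∫ x in T, ‖gradient u x‖ ^ 2) = 0) :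
    ∀ x : E n, u x = (∫ y in T, u y) / (volume T).toReal := by
  obtain ⟨x₀, hx₀⟩ := hT.interior_nonempty
  have hcg : Continuous (gradient u) := continuous_gradient hu.contDiff
  have hint : IntegrableOn (fun x => ‖gradient u x‖ ^ 2) T volume :=
    integrableOn_of_continuous hT.isCompact ((hcg.norm).pow 2)
  have hae : (fun x => ‖gradient u x‖ ^ 2) =ᵐ[volume.restrict T] 0 :=
    (setIntegral_eq_zero_iff_of_nonneg_ae (Filter.Eventually.of_forall fun x => sq_nonneg _)
      hint).mp hgrad
  have hnull : volume ({x | gradient u x ≠ 0} ∩ T) = 0 := by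
    have h1 : volume.restrict T {x | ¬ (‖gradient u x‖ ^ 2 = 0)} = 0 := by
      have := Filter.EventuallyEq.symm hae
      rw [Filter.EventuallyEq, ae_iff] at hae
      simpa using hae
    have h2 := Measure.restrict_apply₀' (s := T) (μ := volume)
      (t := {x | ¬ (‖gradient u x‖ ^ 2 = 0)}) (hT.measurableSet.nullMeasurableSet)
    rw [h1] at h2
    have h3 : ({x | gradient u x ≠ 0} ∩ T) ⊆ {x | ¬ (‖gradient u x‖ ^ 2 = 0)} ∩ T := by
      intro x hx
      refine ⟨?_, hx.2⟩
      simp only [Set.mem_setOf_eq]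
      intro hc
      exact hx.1 (by simpa using (pow_eq_zero_iff (n := 2) (by norm_num)).mp hc)
    exact measure_mono_null h3 h2.symm
  have hOopen : IsOpen (interior T ∩ {x | gradient u x ≠ 0}) :=
    isOpen_interior.inter ((isClosed_singleton.preimage hcg).isOpen_compl)
  have hOempty : interior T ∩ {x | gradient u x ≠ 0} = ∅ := by
    rw [← hOopen.measure_eq_zero_iff volume]
    refine measure_mono_null ?_ hnull
    intro x hx
    exact Set.mem_inter hx.2 (interior_subset hx.1)
  have hgrad0 : ∀ x ∈ interior T, fderiv ℝ u x = 0 := by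
    intro x hx
    by_contra hne
    have hgne : gradient u x ≠ 0 := fun h => hne (gradient_eq_zero_iff.mp h)
    exact absurd (Set.eq_empty_iff_forall_notMem.mp hOempty x ⟨hx, hgne⟩) (fun h => h)
  have hconst : ∀ x ∈ interior T, u x = u x₀ := by
    intro x hx
    refine (hT.convex.interior).is_const_of_fderivWithin_eq_zero
      (hu.contDiff.differentiable (by norm_num)).differentiableOn ?_ hx hx₀
    intro z hz
    rw [fderivWithin_of_isOpen isOpen_interior hz]
    exact hgrad0 z hz
  have hall : ∀ x : E n, u x = u x₀ := by
    have hana : AnalyticOnNhd ℝ (fun x => u x - u x₀) Set.univ := by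
      have h2 : AnalyticOnNhd ℝ (fun _ : E n => u x₀) Set.univ := fun x _ => analyticAt_const
      exact hu.analytic.sub h2
    have hev : (fun x => u x - u x₀) =ᶠ[nhds x₀] 0 := by
      filter_upwards [isOpen_interior.mem_nhds hx₀] with x hx
      simp [hconst x hx]
    have := hana.eqOn_zero_of_preconnected_of_eventuallyEq_zero isPreconnected_univ
      (Set.mem_univ x₀) hev
    intro x
    have hx := this (Set.mem_univ x)
    simpa [sub_eq_zero] using hx
  have hmean : (∫ y in T, u y) = (volume T).toReal * u x₀ := by
    rw [show (fun y => u y) = (fun _ : E n => u x₀) from funext hall]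
    rw [setIntegral_const]
    simp [smul_eq_mul, Measure.real]
  intro x
  rw [hall x, hmean]
  field_simp [hT.volume_toReal_pos.ne']

def evalL (n : ℕ) : MvPolynomial (Fin n) ℝ →ₗ[ℝ] (E n → ℝ) where
  toFun P := fun x => MvPolynomial.eval (fun i => x i) P
  map_add' P Q := funext fun x => by simp
  map_smul' c P := funext fun x => by simp [MvPolynomial.smul_eval]

def Vsp (n p : ℕ) : Submodule ℝ (E n → ℝ) :=
  Submodule.map (evalL n) (MvPolynomial.restrictTotalDegree (Fin n) ℝ (p + 1))

lemma mem_Vsp {p : ℕ} {g : E n → ℝ} : g ∈ Vsp n p ↔ IsPolyDeg (p + 1) g := by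
  constructor
  · rintro ⟨P, hP, rfl⟩
    exact ⟨P, (MvPolynomial.mem_restrictTotalDegree _ _ _).mp hP, fun x => rfl⟩
  · rintro ⟨P, hP, he⟩
    exact ⟨P, (MvPolynomial.mem_restrictTotalDegree _ _ _).mpr hP, (funext he).symm⟩

instance VspFD (n p : ℕ) : FiniteDimensional ℝ (Vsp n p) := by
  unfold Vsp; infer_instance

def V0 (n p : ℕ) (T : Set (E n)) (hT : IsSimplex T) : Submodule ℝ (E n → ℝ) where
  carrier := {g | IsPolyDeg (p + 1) g ∧ (∫ x in T, g x) = 0}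
  zero_mem' := ⟨isPolyDeg_zero, by simp⟩
  add_mem' := by
    rintro g h ⟨hg1, hg2⟩ ⟨hh1, hh2⟩
    refine ⟨hg1.add hh1, ?_⟩
    have ig := integrableOn_of_continuous hT.isCompact
      (hg1.contDiff.continuous (n := (⊤:ℕ∞)))
    have ih := integrableOn_of_continuous hT.isCompact
      (hh1.contDiff.continuous (n := (⊤:ℕ∞)))
    rw [show (∫ x in T, (g + h) x) = ∫ x in T, (g x + h x) from rfl,
      integral_add ig ih, hg2, hh2, add_zero]
  smul_mem' := by
    rintro c g ⟨hg1, hg2⟩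
    refine ⟨hg1.smul c, ?_⟩
    rw [show (∫ x in T, (c • g) x) = ∫ x in T, c * g x from rfl, integral_const_mul, hg2,
      mul_zero]

lemma mem_V0 {p : ℕ} {T : Set (E n)} {hT : IsSimplex T} {g : E n → ℝ} :
    g ∈ V0 n p T hT ↔ (IsPolyDeg (p + 1) g ∧ (∫ x in T, g x) = 0) := Iff.rfl

lemma V0FD (n p : ℕ) (T : Set (E n)) (hT : IsSimplex T) :
    FiniteDimensional ℝ (V0 n p T hT) := by
  apply Submodule.finiteDimensional_of_le (S₂ := Vsp n p)
  intro g hg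
  exact mem_Vsp.mpr ((mem_V0.mp hg).1)

lemma integrableOn_inner_grad {T : Set (E n)} (hT : IsSimplex T) {u v : E n → ℝ}
    (hu : ContDiff ℝ (⊤ : ℕ∞) u) (hv : ContDiff ℝ (⊤ : ℕ∞) v) :
    IntegrableOn (fun x => (inner ℝ (gradient u x) (gradient v x) : ℝ)) T volume :=
  integrableOn_of_continuous hT.isCompact
    ((continuous_gradient hu).inner (continuous_gradient hv))

def V0c (n p : ℕ) (T : Set (E n)) (hT : IsSimplex T) : Type := ↥(V0 n p T hT)

instance (n p : ℕ) (T : Set (E n)) (hT : IsSimplex T) : AddCommGroup (V0c n p T hT) :=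
  inferInstanceAs (AddCommGroup ↥(V0 n p T hT))

instance (n p : ℕ) (T : Set (E n)) (hT : IsSimplex T) : Module ℝ (V0c n p T hT) :=
  inferInstanceAs (Module ℝ ↥(V0 n p T hT))

instance (n p : ℕ) (T : Set (E n)) (hT : IsSimplex T) : FiniteDimensional ℝ (V0c n p T hT) :=
  V0FD n p T hT

def V0c.val {n p : ℕ} {T : Set (E n)} {hT : IsSimplex T} (u : V0c n p T hT) : E n → ℝ :=
  (show ↥(V0 n p T hT) from u).1

def V0c.mk {n p : ℕ} {T : Set (E n)} {hT : IsSimplex T} (g : E n → ℝ)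
    (hg : g ∈ V0 n p T hT) : V0c n p T hT :=
  show ↥(V0 n p T hT) from ⟨g, hg⟩

lemma V0c.val_mk {n p : ℕ} {T : Set (E n)} {hT : IsSimplex T} (g : E n → ℝ)
    (hg : g ∈ V0 n p T hT) : (V0c.mk (hT := hT) g hg).val = g := rfl

lemma V0c.prop {n p : ℕ} {T : Set (E n)} {hT : IsSimplex T} (u : V0c n p T hT) :
    IsPolyDeg (p + 1) u.val ∧ (∫ x in T, u.val x) = 0 :=
  (show ↥(V0 n p T hT) from u).2

lemma V0c.val_add {n p : ℕ} {T : Set (E n)} {hT : IsSimplex T} (u v : V0c n p T hT) :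
    (u + v).val = u.val + v.val := rfl

lemma V0c.val_smul {n p : ℕ} {T : Set (E n)} {hT : IsSimplex T} (r : ℝ) (u : V0c n p T hT) :
    (r • u).val = r • u.val := rfl

lemma V0c.ext {n p : ℕ} {T : Set (E n)} {hT : IsSimplex T} {u v : V0c n p T hT}
    (h : u.val = v.val) : u = v := by
  have : (show ↥(V0 n p T hT) from u) = (show ↥(V0 n p T hT) from v) := Subtype.ext h
  exact this

def core (n p : ℕ) (T : Set (E n)) (hT : IsSimplex T) :
    InnerProductSpace.Core ℝ (V0c n p T hT) where
  inner u v := ∫ x in T, (inner ℝ (gradient u.val x) (gradient v.val x) : ℝ)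
  conj_inner_symm u v := by
    simp only [conj_trivial]
    show (∫ x in T, (inner ℝ (gradient v.val x) (gradient u.val x) : ℝ))
      = ∫ x in T, (inner ℝ (gradient u.val x) (gradient v.val x) : ℝ)
    congr 1
    funext x
    exact real_inner_comm _ _
  re_inner_nonneg u := by
    simp only [RCLike.re_to_real]
    exact integral_nonneg fun x => real_inner_self_nonneg
  add_left u v w := by
    have hu := (u.prop.1).contDiff
    have hv := (v.prop.1).contDiff
    have key : (fun x => (inner ℝ (gradient (u + v).val x) (gradient w.val x) : ℝ))
        = fun x => (inner ℝ (gradient u.val x) (gradient w.val x) : ℝ)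
          + (inner ℝ (gradient v.val x) (gradient w.val x) : ℝ) := by
      funext x
      rw [V0c.val_add, gradient_add' (hu.differentiable (by norm_num) x)
        (hv.differentiable (by norm_num) x), inner_add_left]
    show (∫ x in T, (inner ℝ (gradient (u + v).val x) (gradient w.val x) : ℝ)) = _
    rw [key]
    exact integral_add (integrableOn_inner_grad hT hu (w.prop.1).contDiff)
      (integrableOn_inner_grad hT hv (w.prop.1).contDiff)
  smul_left u v r := by
    simp only [conj_trivial]
    have hu := (u.prop.1).contDiff
    have key : (fun x => (inner ℝ (gradient (r • u).val x) (gradient v.val x) : ℝ))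
        = fun x => r * (inner ℝ (gradient u.val x) (gradient v.val x) : ℝ) := by
      funext x
      rw [V0c.val_smul, gradient_smul' (hu.differentiable (by norm_num) x) r,
        real_inner_smul_left]
    show (∫ x in T, (inner ℝ (gradient (r • u).val x) (gradient v.val x) : ℝ)) = _
    rw [key, integral_const_mul]
  definite u hu0 := by
    have hpoly := u.prop.1
    have hmean := u.prop.2
    have h2 : (∫ x in T, ‖gradient u.val x‖ ^ 2) = 0 := by
      rw [← hu0]
      show _ = ∫ x in T, (inner ℝ (gradient u.val x) (gradient u.val x) : ℝ)
      congr 1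
      funext x
      exact (real_inner_self_eq_norm_sq _).symm
    have hcst := poly_eq_const_of_grad_zero hT hpoly h2
    have hz : ∀ x : E n, u.val x = 0 := by
      intro x; rw [hcst x, hmean, zero_div]
    apply V0c.ext
    funext x
    exact hz x

noncomputable instance (n p : ℕ) (T : Set (E n)) (hT : IsSimplex T) :
    NormedAddCommGroup (V0c n p T hT) :=
  (core n p T hT).toNormedAddCommGroup

noncomputable instance (n p : ℕ) (T : Set (E n)) (hT : IsSimplex T) :
    InnerProductSpace ℝ (V0c n p T hT) :=
  InnerProductSpace.ofCore _

instance (n p : ℕ) (T : Set (E n)) (hT : IsSimplex T) : CompleteSpace (V0c n p T hT) :=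
  FiniteDimensional.complete ℝ _

lemma V0c.inner_def {n p : ℕ} {T : Set (E n)} {hT : IsSimplex T} (u v : V0c n p T hT) :
    (inner ℝ u v : ℝ) = ∫ x in T, (inner ℝ (gradient u.val x) (gradient v.val x) : ℝ) := rfl

lemma exists_galerkin (n p : ℕ) (T : Set (E n)) (hT : IsSimplex T) (f : E n → ℝ)
    (hf : ContDiff ℝ (⊤ : ℕ∞) f) :
    ∃ g : E n → ℝ, IsPolyDeg (p + 1) g ∧ (∫ x in T, (f x - g x)) = 0 ∧
      ∀ w : E n → ℝ, IsPolyDeg (p + 1) w →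
        (∫ x in T, (inner ℝ (gradient (f - g) x) (gradient w x) : ℝ)) = 0 := by
  let ℓlin : V0c n p T hT →ₗ[ℝ] ℝ :=
    { toFun := fun w => ∫ x in T, (inner ℝ (gradient f x) (gradient w.val x) : ℝ)
      map_add' := by
        intro u v
        have hu := (u.prop.1).contDiff
        have hv := (v.prop.1).contDiff
        have key : (fun x => (inner ℝ (gradient f x) (gradient (u + v).val x) : ℝ))
            = fun x => (inner ℝ (gradient f x) (gradient u.val x) : ℝ)
              + (inner ℝ (gradient f x) (gradient v.val x) : ℝ) := by
          funext x
          rw [V0c.val_add, gradient_add' (hu.differentiable (by norm_num) x)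
            (hv.differentiable (by norm_num) x), inner_add_right]
        show (∫ x in T, (inner ℝ (gradient f x) (gradient (u + v).val x) : ℝ)) = _
        rw [key]
        exact integral_add (integrableOn_inner_grad hT hf hu) (integrableOn_inner_grad hT hf hv)
      map_smul' := by
        intro r u
        have hu := (u.prop.1).contDiff
        have key : (fun x => (inner ℝ (gradient f x) (gradient (r • u).val x) : ℝ))
            = fun x => r * (inner ℝ (gradient f x) (gradient u.val x) : ℝ) := by
          funext x
          rw [V0c.val_smul, gradient_smul' (hu.differentiable (by norm_num) x) r,
            real_inner_smul_right]
        show (∫ x in T, (inner ℝ (gradient f x) (gradient (r • u).val x) : ℝ)) = _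
        rw [key, integral_const_mul]
        rfl }
  let ℓ : V0c n p T hT →L[ℝ] ℝ := LinearMap.toContinuousLinearMap ℓlin
  let g₀ : V0c n p T hT := (InnerProductSpace.toDual ℝ (V0c n p T hT)).symm ℓ
  have hg₀ : ∀ w : V0c n p T hT,
      (∫ x in T, (inner ℝ (gradient g₀.val x) (gradient w.val x) : ℝ))
        = ∫ x in T, (inner ℝ (gradient f x) (gradient w.val x) : ℝ) := by
    intro w
    have h := InnerProductSpace.toDual_symm_apply (𝕜 := ℝ) (E := V0c n p T hT) (y := ℓ) (x := w)
    rw [V0c.inner_def] at h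
    exact h
  have hg₀poly : IsPolyDeg (p + 1) g₀.val := g₀.prop.1
  have hg₀mean : (∫ x in T, g₀.val x) = 0 := g₀.prop.2
  have hg₀d := hg₀poly.contDiff.differentiable (by norm_num)
  set c : ℝ := (∫ x in T, f x) / (volume T).toReal with hc
  refine ⟨fun x => g₀.val x + c, ?_, ?_, ?_⟩
  · exact hg₀poly.add (isPolyDeg_const c)
  · have hif : IntegrableOn f T volume := integrableOn_of_continuous hT.isCompact hf.continuous
    have hig : IntegrableOn (fun x => g₀.val x + c) T volume :=
      integrableOn_of_continuous hT.isCompact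
        ((hg₀poly.contDiff.continuous (n := (⊤:ℕ∞))).add continuous_const)
    rw [integral_sub hif hig]
    have heq : (∫ x in T, (g₀.val x + c)) = (volume T).toReal * c := by
      rw [integral_add (integrableOn_of_continuous hT.isCompact
        (hg₀poly.contDiff.continuous (n := (⊤:ℕ∞)))) (integrableOn_const
          hT.volume_ne_top), hg₀mean, setIntegral_const, Measure.real, zero_add, smul_eq_mul]
    rw [heq, hc, mul_comm, div_mul_cancel₀ _ hT.volume_toReal_pos.ne', sub_self]
  · intro w hw
    set wc : ℝ := (∫ x in T, w x) / (volume T).toReal with hwc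
    have hw0poly : IsPolyDeg (p + 1) (fun x => w x - wc) :=
      hw.sub (isPolyDeg_const wc)
    have hw0mean : (∫ x in T, (w x - wc)) = 0 := by
      rw [integral_sub (integrableOn_of_continuous hT.isCompact
        (hw.contDiff.continuous (n := (⊤:ℕ∞)))) (integrableOn_const
          hT.volume_ne_top), setIntegral_const, Measure.real, smul_eq_mul, hwc,
        mul_comm, div_mul_cancel₀ _ hT.volume_toReal_pos.ne', sub_self]
    set w₀ : V0c n p T hT := V0c.mk (hT := hT) (fun x => w x - wc)
      (mem_V0.mpr ⟨hw0poly, hw0mean⟩) with hw₀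
    have hgradw : ∀ x : E n, gradient w x = gradient w₀.val x := by
      intro x
      rw [hw₀, V0c.val_mk]
      rw [show (fun x => w x - wc) = w - (fun _ => wc) from rfl,
        gradient_sub' (hw.contDiff.differentiable (by norm_num) x)
          (differentiable_const wc).differentiableAt, gradient_fun_const]
      simp
    have hgradfg : ∀ x : E n,
        gradient (f - fun x => g₀.val x + c) x = gradient f x - gradient g₀.val x := by
      intro x
      rw [gradient_sub' (hf.differentiable (by norm_num) x) ((hg₀d x).add_const c)]
      congr 1
      rw [show (fun x => g₀.val x + c) = g₀.val + (fun _ => c) from rfl,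
        gradient_add' (hg₀d x) (differentiable_const c).differentiableAt, gradient_fun_const]
      simp
    have key : (fun x => (inner ℝ (gradient (f - fun x => g₀.val x + c) x) (gradient w x) : ℝ))
        = fun x => (inner ℝ (gradient f x) (gradient w₀.val x) : ℝ)
          - (inner ℝ (gradient g₀.val x) (gradient w₀.val x) : ℝ) := by
      funext x
      rw [hgradfg x, hgradw x, inner_sub_left]
    rw [show (∫ x in T, (inner ℝ (gradient (f - fun x => g₀.val x + c) x) (gradient w x) : ℝ))
        = ∫ x in T, ((inner ℝ (gradient f x) (gradient w₀.val x) : ℝ)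
          - (inner ℝ (gradient g₀.val x) (gradient w₀.val x) : ℝ)) from by rw [key]]
    have hsub := integral_sub (μ := volume.restrict T)
      (integrableOn_inner_grad hT hf hw0poly.contDiff)
      (integrableOn_inner_grad hT hg₀poly.contDiff hw0poly.contDiff)
    have horth := hg₀ w₀
    simp only [hw₀, V0c.val_mk] at horth ⊢
    rw [hsub, horth, sub_self]

lemma galerkin_unique (n p : ℕ) (T : Set (E n)) (hT : IsSimplex T) (f : E n → ℝ)
    (hf : ContDiff ℝ (⊤ : ℕ∞) f) (g g' : E n → ℝ)
    (hg : IsPolyDeg (p + 1) g) (hg' : IsPolyDeg (p + 1) g')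
    (hm : (∫ x in T, (f x - g x)) = 0) (hm' : (∫ x in T, (f x - g' x)) = 0)
    (ho : ∀ w : E n → ℝ, IsPolyDeg (p + 1) w →
      (∫ x in T, (inner ℝ (gradient (f - g) x) (gradient w x) : ℝ)) = 0)
    (ho' : ∀ w : E n → ℝ, IsPolyDeg (p + 1) w →
      (∫ x in T, (inner ℝ (gradient (f - g') x) (gradient w x) : ℝ)) = 0) :
    g = g' := by
  have hdpoly : IsPolyDeg (p + 1) (g - g') := hg.sub hg'
  have hfd := hf.differentiable (by norm_num)
  have hgd := hg.contDiff.differentiable (by norm_num)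
  have hg'd := hg'.contDiff.differentiable (by norm_num)
  have hgrad : ∀ x : E n,
      gradient (g - g') x = gradient (f - g') x - gradient (f - g) x := by
    intro x
    rw [gradient_sub' (hfd x) (hg'd x), gradient_sub' (hfd x) (hgd x),
      gradient_sub' (hgd x) (hg'd x)]
    abel
  have hzero : (∫ x in T, (inner ℝ (gradient (g - g') x) (gradient (g - g') x) : ℝ)) = 0 := by
    have h1 := ho (g - g') hdpoly
    have h2 := ho' (g - g') hdpoly
    have key : (fun x => (inner ℝ (gradient (g - g') x) (gradient (g - g') x) : ℝ))
        = fun x => (inner ℝ (gradient (f - g') x) (gradient (g - g') x) : ℝ)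
          - (inner ℝ (gradient (f - g) x) (gradient (g - g') x) : ℝ) := by
      funext x
      rw [hgrad x, inner_sub_left]
    rw [show (∫ x in T, (inner ℝ (gradient (g - g') x) (gradient (g - g') x) : ℝ))
        = ∫ x in T, ((inner ℝ (gradient (f - g') x) (gradient (g - g') x) : ℝ)
          - (inner ℝ (gradient (f - g) x) (gradient (g - g') x) : ℝ)) from by rw [key]]
    rw [integral_sub (integrableOn_inner_grad hT (u := f - g') (v := g - g')
        (hf.sub hg'.contDiff) hdpoly.contDiff)
      (integrableOn_inner_grad hT (u := f - g) (v := g - g')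
        (hf.sub hg.contDiff) hdpoly.contDiff), h1, h2, sub_self]
  have hsq : (∫ x in T, ‖gradient (g - g') x‖ ^ 2) = 0 := by
    rw [← hzero]
    congr 1
    funext x
    exact (real_inner_self_eq_norm_sq _).symm
  have hfi : IntegrableOn f T volume := integrableOn_of_continuous hT.isCompact hf.continuous
  have hgi : IntegrableOn g T volume :=
    integrableOn_of_continuous hT.isCompact (hg.contDiff.continuous (n := (⊤:ℕ∞)))
  have hg'i : IntegrableOn g' T volume :=
    integrableOn_of_continuous hT.isCompact (hg'.contDiff.continuous (n := (⊤:ℕ∞)))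
  have hmean : (∫ x in T, (g - g') x) = 0 := by
    have hrw : (∫ x in T, (g - g') x)
        = (∫ x in T, ((f x - g' x) - (f x - g x))) := by
      congr 1
      funext x
      show g x - g' x = (f x - g' x) - (f x - g x)
      ring
    rw [hrw, integral_sub (f := fun x => f x - g' x) (g := fun x => f x - g x)
      (hfi.sub hg'i) (hfi.sub hgi), hm, hm', sub_self]
  have hcst := poly_eq_const_of_grad_zero hT hdpoly hsq
  have : ∀ x : E n, (g - g') x = 0 := by
    intro x
    rw [hcst x, hmean, zero_div]
  have hgg' : g - g' = 0 := funext this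
  exact sub_eq_zero.mp hgg'

lemma integrableOn_grad_sq {T : Set (E n)} (hT : IsSimplex T) {u : E n → ℝ}
    (hu : ContDiff ℝ (⊤ : ℕ∞) u) :
    IntegrableOn (fun x => ‖gradient u x‖ ^ 2) T volume :=
  integrableOn_of_continuous hT.isCompact (((continuous_gradient hu).norm).pow 2)

lemma cea (n p : ℕ) (T : Set (E n)) (hT : IsSimplex T) (f g v : E n → ℝ)
    (hf : ContDiff ℝ (⊤ : ℕ∞) f) (hg : IsPolyDeg (p + 1) g) (hv : IsPolyDeg (p + 1) v)
    (ho : ∀ w : E n → ℝ, IsPolyDeg (p + 1) w →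
      (∫ x in T, (inner ℝ (gradient (f - g) x) (gradient w x) : ℝ)) = 0) :
    L2 T (gradient (f - g)) ≤ L2 T (gradient (f - v)) := by
  unfold L2
  apply Real.sqrt_le_sqrt
  have hfd := hf.differentiable (by norm_num)
  have hgd := hg.contDiff.differentiable (by norm_num)
  have hvd := hv.contDiff.differentiable (by norm_num)
  have hsplit : ∀ x : E n,
      gradient (f - v) x = gradient (f - g) x + gradient (g - v) x := by
    intro x
    rw [gradient_sub' (hfd x) (hvd x), gradient_sub' (hfd x) (hgd x),
      gradient_sub' (hgd x) (hvd x)]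
    abel
  have hpt : (fun x => ‖gradient (f - v) x‖ ^ 2)
      = fun x => ‖gradient (f - g) x‖ ^ 2
        + (2 * (inner ℝ (gradient (f - g) x) (gradient (g - v) x) : ℝ)
          + ‖gradient (g - v) x‖ ^ 2) := by
    funext x
    rw [hsplit x, norm_add_sq_real]
    ring
  have hIa := integrableOn_grad_sq hT (u := f - g) (hf.sub hg.contDiff)
  have hIb := integrableOn_grad_sq hT (u := g - v) (hg.contDiff.sub hv.contDiff)
  have hIab := integrableOn_inner_grad hT (u := f - g) (v := g - v)
    (hf.sub hg.contDiff) (hg.contDiff.sub hv.contDiff)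
  have hB2 : IntegrableOn (fun x => 2 * (inner ℝ (gradient (f - g) x) (gradient (g - v) x) : ℝ)
      + ‖gradient (g - v) x‖ ^ 2) T volume := (hIab.const_mul 2).add hIb
  have e1 : (∫ x in T, ‖gradient (f - v) x‖ ^ 2)
      = ∫ x in T, (‖gradient (f - g) x‖ ^ 2
        + (2 * (inner ℝ (gradient (f - g) x) (gradient (g - v) x) : ℝ)
          + ‖gradient (g - v) x‖ ^ 2)) := by
    rw [hpt]
  have e2 := integral_add (μ := volume.restrict T)
    (f := fun x => ‖gradient (f - g) x‖ ^ 2)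
    (g := fun x => 2 * (inner ℝ (gradient (f - g) x) (gradient (g - v) x) : ℝ)
      + ‖gradient (g - v) x‖ ^ 2) hIa hB2
  have e3 := integral_add (μ := volume.restrict T)
    (f := fun x => 2 * (inner ℝ (gradient (f - g) x) (gradient (g - v) x) : ℝ))
    (g := fun x => ‖gradient (g - v) x‖ ^ 2) (hIab.const_mul 2) hIb
  have e4 := integral_const_mul (μ := volume.restrict T) 2
    (fun x => (inner ℝ (gradient (f - g) x) (gradient (g - v) x) : ℝ))
  have ho2 := ho (g - v) (hg.sub hv)
  have hnn : 0 ≤ ∫ x in T, ‖gradient (g - v) x‖ ^ 2 :=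
    integral_nonneg fun x => sq_nonneg _
  rw [e1, e2, e3, e4, ho2]
  linarith


/-- Lemma 2.3, the `p`-robust stability estimate with `σ₂ = C_P C_{st,2}`.
Let `T ⊂ ℝ^n` be a nondegenerate simplex with diameter `h_T`, `p ∈ ℕ`. Assume the Poincaré
inequality with constant `C_P` and the stability estimate with constant `C₂` hold for all
smooth `f`. Then for every smooth `f` there is a unique `g ∈ P_{p+1}(T)` with
`∫_T (f − g) dx = 0` and `∇(f − g) ⊥ ∇P_{p+1}(T)` in `L²(T;ℝ^n)` (the Galerkin projection
`Gf`), and it satisfies `‖f − g‖_{L²(T)} ≤ C_P C₂ h_T ‖∇f − Π_p ∇f‖_{L²(T;ℝ^n)}`. -/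
theorem galerkin_projection_stability (n p : ℕ) (T : Set (E n)) (hT : IsSimplex T)
    (CP C₂ : ℝ) (hCP : 0 ≤ CP) (hC₂ : 0 ≤ C₂)
    (hPoincare : ∀ f : E n → ℝ, ContDiff ℝ (⊤ : ℕ∞) f →
      L2 T (fun x => f x - (∫ y in T, f y) / (volume T).toReal) ≤
        CP * Metric.diam T * L2 T (gradient f))
    (hstab : ∀ f : E n → ℝ, ContDiff ℝ (⊤ : ℕ∞) f →
      ∀ g₂ : E n → E n, IsL2ProjVF p T (gradient f) g₂ →
        sInf {r : ℝ | ∃ v : E n → ℝ, IsPolyDeg (p + 1) v ∧ r = L2 T (gradient (f - v))} ≤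
          C₂ * L2 T (fun x => gradient f x - g₂ x)) :
    ∀ f : E n → ℝ, ContDiff ℝ (⊤ : ℕ∞) f →
      (∃! g : E n → ℝ, IsPolyDeg (p + 1) g ∧ (∫ x in T, (f x - g x)) = 0 ∧
        ∀ w : E n → ℝ, IsPolyDeg (p + 1) w →
          (∫ x in T, (inner ℝ (gradient (f - g) x) (gradient w x) : ℝ)) = 0) ∧
      ∀ g : E n → ℝ, (IsPolyDeg (p + 1) g ∧ (∫ x in T, (f x - g x)) = 0 ∧
          ∀ w : E n → ℝ, IsPolyDeg (p + 1) w →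
            (∫ x in T, (inner ℝ (gradient (f - g) x) (gradient w x) : ℝ)) = 0) →
        ∀ g₂ : E n → E n, IsL2ProjVF p T (gradient f) g₂ →
          L2 T (f - g) ≤
            CP * C₂ * Metric.diam T * L2 T (fun x => gradient f x - g₂ x) := by
  intro f hf
  constructor
  · obtain ⟨g, hg1, hg2, hg3⟩ := exists_galerkin n p T hT f hf
    refine ⟨g, ⟨hg1, hg2, hg3⟩, ?_⟩
    rintro g' ⟨hg'1, hg'2, hg'3⟩
    exact galerkin_unique n p T hT f hf g' g hg'1 hg1 hg'2 hg2 hg'3 hg3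
  · rintro g ⟨hg1, hg2, hg3⟩ g₂ hg₂
    set X := L2 T (fun x => gradient f x - g₂ x) with hX
    -- Poincaré for f - g
    have hfg : ContDiff ℝ (⊤ : ℕ∞) (f - g) := hf.sub hg1.contDiff
    have hP := hPoincare (f - g) hfg
    have h0 : (∫ y in T, (f - g) y) = 0 := hg2
    have hL2eq : L2 T (fun x => (f - g) x - (∫ y in T, (f - g) y) / (volume T).toReal)
        = L2 T (f - g) := by
      rw [h0]
      congr 1
      funext x
      simp
    rw [hL2eq] at hP
    -- quasi-optimality
    have hB : L2 T (gradient (f - g)) ≤ C₂ * X := by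
      have hS : sInf {r : ℝ | ∃ v : E n → ℝ, IsPolyDeg (p + 1) v ∧ r = L2 T (gradient (f - v))}
          ≤ C₂ * X := hstab f hf g₂ hg₂
      have hne : {r : ℝ | ∃ v : E n → ℝ, IsPolyDeg (p + 1) v ∧
          r = L2 T (gradient (f - v))}.Nonempty :=
        ⟨L2 T (gradient (f - g)), g, hg1, rfl⟩
      refine le_trans (le_csInf hne ?_) hS
      rintro r ⟨v, hv, rfl⟩
      exact cea n p T hT f g v hf hg1 hv hg3
    have hdiam : 0 ≤ Metric.diam T := Metric.diam_nonneg
    calc L2 T (f - g) ≤ CP * Metric.diam T * L2 T (gradient (f - g)) := hP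
      _ ≤ CP * Metric.diam T * (C₂ * X) := by
          apply mul_le_mul_of_nonneg_left hB (by positivity)
      _ = CP * C₂ * Metric.diam T * X := by ring

end
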